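/- Let κ be an infinite cardinal, I a nonempty set with |I| ≤ κ, U an ultrafilter on I, and for each i ∈ I let U_i be a normal measure on κ; suppose there is K ∈ U such that U_i ≠ U_j whenever i, j ∈ K and i ≠ j. If g is a function with domain I × κ that is not (U*⟨U_i : i ∈ I⟩)-equivalent to any function of the form (i,x) ↦ f(i) for a function f with domain I, then g is (U*⟨U_i : i ∈ I⟩)-equivalent to a one-to-one function. -/

import Mathlib

/-!
Since `g` is not `W`-equivalent to a function of `i` alone, for `U`-almost every `i` the map
`g (i, ·)` is not constant modulo `U_i`, so pressing down makes it one-to-one on a `U_i`-large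
set. Code the indices by ordinals `e i < κ`. A diagonal intersection shrinks each fibre to a set
`B i ∈ U_i` above `e i` such that `g (i, x)` avoids, for every `ξ < x`, the fewer than `κ`
values `g (j, y)` with `e j, y ≤ ξ`, and such that above `e j` it lies in a set separating `U_i`
from `U_j`; the latter makes the `B i` pairwise disjoint. Comparing second coordinates then
shows that `g` is one-to-one on `{(i, x) | x ∈ B i} ∈ W`. Finally `g` is redefined off a
`W`-large subset of this set, drawing the missing values from a `W`-small part of size `κ`.
-/

universe u v

/-- An ultrafilter `W` on a set is `κ`-complete if the intersection of any family of
fewer than `κ` members of `W` is again a member of `W`. -/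
def UFComplete (κ : Cardinal.{u}) {X : Type u} (W : Ultrafilter X) : Prop :=
  ∀ (ι : Type u) (f : ι → Set X), Cardinal.mk ι < κ → (∀ i, f i ∈ W) → (⋂ i, f i) ∈ W

/-- A normal measure on an infinite cardinal `κ` (whose underlying set of ordinals below
`κ` is realized as `κ.ord.ToType`) is a `κ`-complete nonprincipal ultrafilter `U` on `κ`
such that every function `f : κ → κ` regressive on a set in `U` is constant on a set
in `U`. -/
def IsNormalMeasure (κ : Cardinal.{u}) (U : Ultrafilter κ.ord.ToType) : Prop :=
  UFComplete κ U ∧ (∀ x : κ.ord.ToType, ({x} : Set κ.ord.ToType) ∉ U) ∧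
    ∀ f : κ.ord.ToType → κ.ord.ToType,
      {ξ | f ξ < ξ} ∈ U → ∃ c, {ξ | f ξ = c} ∈ U

open Set Filter Cardinal Function

universe w

/-- `W` is the sum `U*⟨Ui i : i ∈ ι⟩`. -/
def IsSumUltrafilter {ι X : Type*} (W : Ultrafilter (ι × X)) (U : Ultrafilter ι)
    (Ui : ι → Ultrafilter X) : Prop :=
  ∀ T : Set (ι × X), T ∈ W ↔ {i | {x | (i, x) ∈ T} ∈ Ui i} ∈ U

theorem UFComplete.compl_mem_of_mk_lt {κ : Cardinal.{u}} {X : Type u} {V : Ultrafilter X}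
    (hV : UFComplete κ V) (hnp : ∀ x, ({x} : Set X) ∉ V) {S : Set X} (hS : #S < κ) :
    Sᶜ ∈ V := by
  have h := hV S (fun x => {(x : X)}ᶜ) hS fun x => Ultrafilter.compl_mem_iff_notMem.2 (hnp x)
  rwa [← compl_iUnion, iUnion_of_singleton_coe] at h

theorem UFComplete.le_mk_of_mem {κ : Cardinal.{u}} {X : Type u} {V : Ultrafilter X}
    (hV : UFComplete κ V) (hnp : ∀ x, ({x} : Set X) ∉ V) {S : Set X} (hS : S ∈ V) :
    κ ≤ #S :=
  not_lt.1 fun h => Ultrafilter.compl_notMem_iff.2 hS (hV.compl_mem_of_mk_lt hnp h)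

theorem Ultrafilter.exists_subset_mk_eq_notMem {X : Type u} (V : Ultrafilter X) {S : Set X}
    (hS : ℵ₀ ≤ #S) : ∃ Q ⊆ S, #Q = #S ∧ Q ∉ V := by
  obtain ⟨φ⟩ : Nonempty (S ⊕ S ≃ S) := Cardinal.eq.1 (by rw [mk_sum, lift_id, add_eq_self hS])
  let P (k : S → S ⊕ S) : Set X := range fun x => (φ (k x) : X)
  have hsub (k) : P k ⊆ S := by
    rintro _ ⟨x, rfl⟩
    exact (φ (k x)).2
  have hmk (k) (hk : Injective k) : #(P k) = #S :=
    mk_range_eq _ (Subtype.val_injective.comp (φ.injective.comp hk))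
  have hdisj : Disjoint (P Sum.inl) (P Sum.inr) := by
    rw [Set.disjoint_left]
    rintro _ ⟨x, rfl⟩ ⟨y, hy⟩
    exact Sum.inr_ne_inl (φ.injective (Subtype.ext hy))
  by_cases hinl : P Sum.inl ∈ V
  · refine ⟨P Sum.inr, hsub _, hmk _ Sum.inr_injective, fun hinr => ?_⟩
    exact V.empty_notMem (hdisj.inter_eq ▸ inter_mem hinl hinr)
  · exact ⟨P Sum.inl, hsub _, hmk _ Sum.inl_injective, hinl⟩

theorem exists_disjoint_mem_of_injOn {ι X : Type*} {F : ι → Ultrafilter X} {K : Set ι}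
    (hF : InjOn F K) :
    ∃ D : ι → ι → Set X, (∀ i ∈ K, ∀ j ∈ K, i ≠ j → D i j ∈ F i) ∧
      ∀ i j, Disjoint (D i j) (D j i) := by
  have hsep : ∀ i ∈ K, ∀ j ∈ K, i ≠ j → ∃ S ∈ F i, S ∉ F j := by
    intro i hi j hj hij
    by_contra! h
    exact hij (hF hi hj (Ultrafilter.eq_of_le h).symm)
  choose! S hSi hSj using hsep
  refine ⟨fun i j => S i j \ S j i, fun i hi j hj hij => ?_, fun i j => disjoint_sdiff_sdiff⟩
  exact sdiff_mem (hSi i hi j hj hij)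
    (Ultrafilter.compl_mem_iff_notMem.2 (hSj j hj i hi hij.symm))

theorem mk_inter_preimage_image_le {α β : Type u} {γ : Type w} {f : α → γ} {A : Set α}
    (hf : InjOn f A) (g : β → γ) (R : Set β) : #(A ∩ f ⁻¹' (g '' R) : Set α) ≤ #R := by
  rw [← Cardinal.lift_le.{w}, ← mk_image_eq_of_injOn_lift _ _ (hf.mono inter_subset_left)]
  calc lift.{u} #(f '' (A ∩ f ⁻¹' (g '' R)))
      ≤ lift.{u} #(g '' R) := Cardinal.lift_le.2 (mk_le_mk_of_subset
        ((image_mono inter_subset_right).trans (image_preimage_subset _ _)))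
    _ ≤ lift.{w} #R := mk_image_le_lift

theorem exists_injective_eqOn_sdiff {α β : Type*} {g : α → β} {T R : Set α} (hg : InjOn g T)
    (hRT : R ⊆ T) (hcard : #↥(T \ R)ᶜ ≤ #R) : ∃ h : α → β, Injective h ∧ EqOn g h (T \ R) := by
  classical
  obtain ⟨φ⟩ := (Cardinal.le_def _ _).1 hcard
  have hφT (q) : (φ q : α) ∈ T := hRT (φ q).2
  have hfresh : ∀ p ∈ T \ R, ∀ q, g p ≠ g (φ q) := fun p hp q h =>
    hp.2 (hg hp.1 (hφT q) h ▸ (φ q).2)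
  refine ⟨fun p => if hp : p ∈ T \ R then g p else g (φ ⟨p, hp⟩), ?_,
    fun p hp => by simp only [hp, dite_true]⟩
  intro p q hpq
  by_cases hp : p ∈ T \ R <;> by_cases hq : q ∈ T \ R <;>
    simp only [hp, hq, dite_true, dite_false] at hpq
  · exact hg hp.1 hq.1 hpq
  · exact absurd hpq (hfresh p hp _)
  · exact absurd hpq.symm (hfresh q hq _)
  · exact congrArg Subtype.val (φ.injective (Subtype.ext (hg (hφT _) (hφT _) hpq)))

theorem injOn_of_pairwise_disjoint_of_forall_lt_ne {ι α β : Type*} [LinearOrder α]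
    {g : ι × α → β} {B : ι → Set α} (hdisj : Pairwise (Disjoint on B))
    (hne : ∀ i j, ∀ x ∈ B i, ∀ y ∈ B j, x < y → g (i, x) ≠ g (j, y)) :
    InjOn g {p | p.2 ∈ B p.1} := by
  rintro ⟨i, x⟩ hx ⟨j, y⟩ hy hxy
  rcases lt_trichotomy x y with hlt | rfl | hlt
  · exact absurd hxy (hne i j x hx y hy hlt)
  · by_cases hij : i = j
    · rw [hij]
    · exact absurd rfl ((hdisj hij).ne_of_mem hx hy)
  · exact absurd hxy.symm (hne j i y hy x hx hlt)

section SumUltrafilter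

variable {ι X : Type*} {U : Ultrafilter ι} {Ui : ι → Ultrafilter X} {W : Ultrafilter (ι × X)}

theorem IsSumUltrafilter.exists_eq_comp_fst_mem {Y : Type*} (hW : IsSumUltrafilter W U Ui)
    (g : ι × X → Y) (h : {i | ∃ c, {x | g (i, x) = c} ∈ Ui i} ∈ U) :
    ∃ f : ι → Y, {p | g p = f p.1} ∈ W := by
  obtain ⟨-, c, -⟩ := Filter.nonempty_of_mem h
  have : Nonempty Y := ⟨c⟩
  choose! f hf using fun i (hi : i ∈ {i | ∃ c, {x | g (i, x) = c} ∈ Ui i}) => hi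
  exact ⟨f, (hW _).2 (mem_of_superset h hf)⟩

theorem IsSumUltrafilter.setOf_mem {B : ι → Set X} (hW : IsSumUltrafilter W U Ui) {G : Set ι}
    (hG : G ∈ U) (hB : ∀ i ∈ G, B i ∈ Ui i) : {p | p.2 ∈ B p.1} ∈ W :=
  (hW _).2 (mem_of_superset hG hB)

theorem IsSumUltrafilter.singleton_prod_notMem (hW : IsSumUltrafilter W U Ui) {i₀ : ι}
    {Q : Set X} (hQ : Q ∉ Ui i₀) : {i₀} ×ˢ Q ∉ W := by
  intro h
  obtain ⟨i, hi⟩ := Filter.nonempty_of_mem ((hW _).1 h)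
  obtain ⟨x, rfl, -⟩ := Filter.nonempty_of_mem hi
  exact hQ (mem_of_superset hi fun x hx => hx.2)

end SumUltrafilter

theorem mk_Iic_ord_toType_lt {κ : Cardinal.{u}} (hκ : ℵ₀ ≤ κ) (ξ : κ.ord.ToType) :
    #(Iic ξ) < κ := by
  rw [← Iio_insert]
  exact mk_insert_le.trans_lt
    (add_lt_of_lt hκ (by simpa using mk_Iio_lt ξ) (one_lt_aleph0.trans_le hκ))

namespace IsNormalMeasure

variable {κ : Cardinal.{u}} {V : Ultrafilter κ.ord.ToType}

theorem exists_mem_of_exists_lt (hN : IsNormalMeasure κ V)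
    {P : κ.ord.ToType → κ.ord.ToType → Prop} (h : {α | ∃ β < α, P β α} ∈ V) :
    ∃ β, {α | P β α} ∈ V := by
  have : Nonempty κ.ord.ToType := nonempty_of_neBot (V : Filter κ.ord.ToType)
  choose! f hf using fun α (hα : α ∈ {α | ∃ β < α, P β α}) => hα
  obtain ⟨c, hc⟩ := hN.2.2 f (mem_of_superset h fun α hα => (hf α hα).1)
  refine ⟨c, mem_of_superset (inter_mem hc h) ?_⟩
  rintro α ⟨hfα, hα⟩
  exact hfα ▸ (hf α hα).2

theorem diagonal_mem (hN : IsNormalMeasure κ V) (C : κ.ord.ToType → Set κ.ord.ToType)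
    (hC : ∀ ξ, C ξ ∈ V) : {α | ∀ ξ < α, α ∈ C ξ} ∈ V := by
  by_contra h
  have h' : {α | ∃ ξ < α, α ∉ C ξ} ∈ V := by
    simpa only [compl_ofPred, not_forall, exists_prop] using
      Ultrafilter.compl_mem_iff_notMem.2 h
  obtain ⟨ξ, hξ⟩ := hN.exists_mem_of_exists_lt h'
  exact Ultrafilter.compl_mem_iff_notMem.1 hξ (hC ξ)

theorem exists_injOn_of_not_const (hN : IsNormalMeasure κ V) {Z : Type*}
    (f : κ.ord.ToType → Z) (h : ¬ ∃ c, {x | f x = c} ∈ V) : ∃ A ∈ V, InjOn f A := by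
  refine ⟨{α | ∃ β < α, f β = f α}ᶜ, Ultrafilter.compl_mem_iff_notMem.2 fun hX => h ?_, ?_⟩
  · obtain ⟨β, hβ⟩ := hN.exists_mem_of_exists_lt hX
    exact ⟨f β, mem_of_superset hβ fun α hα => hα.symm⟩
  · intro α hα β hβ hαβ
    by_contra hne
    rcases lt_or_gt_of_ne hne with hlt | hlt
    · exact hβ ⟨α, hlt, hαβ⟩
    · exact hα ⟨β, hlt, hαβ.symm⟩

theorem Ioi_mem (hκ : ℵ₀ ≤ κ) (hN : IsNormalMeasure κ V) (ξ : κ.ord.ToType) : Ioi ξ ∈ V := by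
  simpa only [compl_Iic] using hN.1.compl_mem_of_mk_lt hN.2.1 (mk_Iic_ord_toType_lt hκ ξ)

end IsNormalMeasure

theorem exists_pairwise_disjoint_mem_forall_lt_ne {κ : Cardinal.{u}} (hκ : ℵ₀ ≤ κ)
    {ι : Type u} {Y : Type*} (e : ι ↪ κ.ord.ToType) {Ui : ι → Ultrafilter κ.ord.ToType}
    {G : Set ι} (hN : ∀ i ∈ G, IsNormalMeasure κ (Ui i)) (hUi : InjOn Ui G)
    (g : ι × κ.ord.ToType → Y) (hg : ∀ i ∈ G, ∃ A ∈ Ui i, InjOn (fun x => g (i, x)) A) :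
    ∃ B : ι → Set κ.ord.ToType, (∀ i ∈ G, B i ∈ Ui i) ∧ Pairwise (Disjoint on B) ∧
      ∀ i j, ∀ x ∈ B i, ∀ y ∈ B j, x < y → g (i, x) ≠ g (j, y) := by
  obtain ⟨D, hDmem, hDdisj⟩ := exists_disjoint_mem_of_injOn hUi
  choose! A hAmem hAinj using hg
  let R (ξ : κ.ord.ToType) : Set (ι × κ.ord.ToType) := (e ⁻¹' Iic ξ) ×ˢ Iic ξ
  have hR (ξ) : #(R ξ) < κ := by
    rw [mk_setProd]
    exact mul_lt_of_lt hκ ((mk_preimage_of_injective _ _ e.injective).trans_lt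
      (mk_Iic_ord_toType_lt hκ ξ)) (mk_Iic_ord_toType_lt hκ ξ)
  let C (i : ι) (ξ : κ.ord.ToType) : Set κ.ord.ToType :=
    {x | (∀ j ∈ G, j ≠ i → e j = ξ → x ∈ D i j) ∧ (x ∈ A i → g (i, x) ∉ g '' R ξ)}
  have hC : ∀ i ∈ G, ∀ ξ, C i ξ ∈ Ui i := by
    intro i hi ξ
    refine inter_mem ?_ ?_
    · by_cases hξ : ∃ j ∈ G, j ≠ i ∧ e j = ξ
      · obtain ⟨j, hj, hji, rfl⟩ := hξ
        refine mem_of_superset (hDmem i hi j hj hji.symm) fun x hx k _ _ hk => ?_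
        rwa [e.injective hk]
      · exact univ_mem' fun x j hj hji hjξ => absurd ⟨j, hj, hji, hjξ⟩ hξ
    · have hsmall := (hN i hi).1.compl_mem_of_mk_lt (hN i hi).2.1
        ((mk_inter_preimage_image_le (hAinj i hi) g (R ξ)).trans_lt (hR ξ))
      exact mem_of_superset hsmall fun x hx hxA hgx => hx ⟨hxA, hgx⟩
  refine ⟨fun i => {x | i ∈ G ∧ x ∈ A i ∧ e i < x ∧ ∀ ξ < x, x ∈ C i ξ}, fun i hi => ?_, ?_, ?_⟩
  · have := inter_mem (inter_mem (hAmem i hi) ((hN i hi).Ioi_mem hκ (e i)))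
      ((hN i hi).diagonal_mem _ (hC i hi))
    exact mem_of_superset this fun x ⟨⟨hxA, hxe⟩, hxC⟩ => ⟨hi, hxA, hxe, hxC⟩
  · intro i j hij
    refine Set.disjoint_left.2 fun x ⟨hi, _, hei, hxi⟩ ⟨hj, _, hej, hxj⟩ => ?_
    exact Set.disjoint_left.1 (hDdisj i j) ((hxi (e j) hej).1 j hj (Ne.symm hij) rfl)
      ((hxj (e i) hei).1 i hi hij rfl)
  · rintro i j x ⟨-, -, hei, -⟩ y ⟨-, hyA, -, hyC⟩ hxy hgxy
    exact (hyC x hxy).2 hyA ⟨(i, x), ⟨hei.le, le_refl x⟩, hgxy⟩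

theorem IsSumUltrafilter.exists_injective_eq_of_injOn {κ : Cardinal.{u}} (hκ : ℵ₀ ≤ κ)
    {ι X : Type u} (hι : #ι ≤ κ) (hX : #X ≤ κ) {U : Ultrafilter ι} {Ui : ι → Ultrafilter X}
    (hC : ∀ i, UFComplete κ (Ui i)) (hnp : ∀ i x, ({x} : Set X) ∉ Ui i)
    {W : Ultrafilter (ι × X)} (hW : IsSumUltrafilter W U Ui) {Y : Type*} {g : ι × X → Y}
    {T : Set (ι × X)} (hT : T ∈ W) (hg : InjOn g T) :
    ∃ h : ι × X → Y, Injective h ∧ {p | g p = h p} ∈ W := by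
  obtain ⟨i₀, hi₀⟩ := Filter.nonempty_of_mem ((hW T).1 hT)
  have hκF : κ ≤ #{x | (i₀, x) ∈ T} := (hC i₀).le_mk_of_mem (hnp i₀) hi₀
  obtain ⟨Q, hQT, hQ, hQU⟩ := (Ui i₀).exists_subset_mk_eq_notMem (hκ.trans hκF)
  have hRT : {i₀} ×ˢ Q ⊆ T := by
    rintro ⟨i, x⟩ ⟨rfl, hx⟩
    exact hQT hx
  have hcard : #↥(T \ {i₀} ×ˢ Q)ᶜ ≤ #↥({i₀} ×ˢ Q) := calc
    #↥(T \ {i₀} ×ˢ Q)ᶜ ≤ #(ι × X) := mk_set_le _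
    _ ≤ κ * κ := by simpa only [mk_prod, lift_id] using mul_le_mul' hι hX
    _ = κ := mul_eq_self hκ
    _ ≤ #↥({i₀} ×ˢ Q) := by rwa [mk_setProd, mk_singleton, one_mul, hQ]
  obtain ⟨h, hinj, heq⟩ := exists_injective_eqOn_sdiff hg hRT hcard
  have hTR : T \ {i₀} ×ˢ Q ∈ W :=
    sdiff_mem hT (Ultrafilter.compl_mem_iff_notMem.2 (hW.singleton_prod_notMem hQU))
  exact ⟨h, hinj, mem_of_superset hTR heq⟩

theorem sum_ultrafilter_classification_general (κ : Cardinal.{u}) (hκ : Cardinal.aleph0 ≤ κ)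
    {I : Type u} (hI : Cardinal.mk I ≤ κ)
    (U : Ultrafilter I) (Ui : I → Ultrafilter κ.ord.ToType)
    (hnormal : ∀ i, IsNormalMeasure κ (Ui i))
    (hK : ∃ K ∈ U, Set.InjOn Ui K)
    (W : Ultrafilter (I × κ.ord.ToType))
    (hW : ∀ T : Set (I × κ.ord.ToType), T ∈ W ↔ {i : I | {x | (i, x) ∈ T} ∈ Ui i} ∈ U)
    {Y : Type v} (g : I × κ.ord.ToType → Y)
    (hg : ¬ ∃ f : I → Y, {p : I × κ.ord.ToType | g p = f p.1} ∈ W) :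
    ∃ h : I × κ.ord.ToType → Y, Function.Injective h ∧ {p | g p = h p} ∈ W := by
  obtain ⟨K, hKU, hKinj⟩ := hK
  let G := K ∩ {i | ¬ ∃ c, {x | g (i, x) = c} ∈ Ui i}
  have hGU : G ∈ U := inter_mem hKU <| Ultrafilter.compl_mem_iff_notMem.2 fun h =>
    hg (IsSumUltrafilter.exists_eq_comp_fst_mem hW g h)
  obtain ⟨e⟩ : Nonempty (I ↪ κ.ord.ToType) := (Cardinal.le_def _ _).1 (by rwa [mk_ord_toType])
  obtain ⟨B, hBU, hBdisj, hBne⟩ := exists_pairwise_disjoint_mem_forall_lt_ne hκ e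
    (fun i _ => hnormal i) (hKinj.mono inter_subset_left) g
    fun i hi => (hnormal i).exists_injOn_of_not_const _ hi.2
  exact IsSumUltrafilter.exists_injective_eq_of_injOn hκ hI (mk_ord_toType κ).le
    (fun i => (hnormal i).1) (fun i => (hnormal i).2.1) hW (IsSumUltrafilter.setOf_mem hW hGU hBU)
    (injOn_of_pairwise_disjoint_of_forall_lt_ne hBdisj hBne)

/-- Let `κ` be an infinite cardinal, `I` nonempty with `|I| ≤ κ`, `U` an
ultrafilter on `I`, and `U_i` normal measures on `κ` which are pairwise distinct on some
`K ∈ U`.  Let `W = U*⟨U_i : i ∈ I⟩` be the sum ultrafilter on `I × κ`.  If `g` with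
domain `I × κ` is not `W`-equivalent to any function of the form `(i,x) ↦ f(i)`, then
`g` is `W`-equivalent to a one-to-one function. -/
theorem sum_ultrafilter_classification (κ : Cardinal.{u}) (hκ : Cardinal.aleph0 ≤ κ)
    {I : Type u} [Nonempty I] (hI : Cardinal.mk I ≤ κ)
    (U : Ultrafilter I) (Ui : I → Ultrafilter κ.ord.ToType)
    (hnormal : ∀ i, IsNormalMeasure κ (Ui i))
    (hK : ∃ K ∈ U, Set.InjOn Ui K)
    (W : Ultrafilter (I × κ.ord.ToType))
    (hW : ∀ T : Set (I × κ.ord.ToType), T ∈ W ↔ {i : I | {x | (i, x) ∈ T} ∈ Ui i} ∈ U)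
    {Y : Type v} (g : I × κ.ord.ToType → Y)
    (hg : ¬ ∃ f : I → Y, {p : I × κ.ord.ToType | g p = f p.1} ∈ W) :
    ∃ h : I × κ.ord.ToType → Y, Function.Injective h ∧ {p | g p = h p} ∈ W :=
  sum_ultrafilter_classification_general κ hκ hI U Ui hnormal hK W hW g hg
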